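/- Let u, v : Ω → ℝ be smooth and satisfy ∂₂u = ∂₁v and u₃·v₄ − u₄·v₃ = 1 identically on Ω. Then for every λ ∈ ℝ the vector fields X = u₃∂₄ − u₄∂₃ + λ∂₁ and Y = −v₃∂₄ + v₄∂₃ − λ∂₂ on Ω commute: [X, Y] = 0. -/

import Mathlib

/-- Partial derivative of `F : ℝ⁴ → ℝ` in the `i`-th coordinate direction. -/
noncomputable def pd (i : Fin 4) (F : (Fin 4 → ℝ) → ℝ) : (Fin 4 → ℝ) → ℝ :=
  fun x => fderiv ℝ F x (Pi.single i 1)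

/-- Lie bracket of two vector fields on ℝ⁴, given by their component functions:
`[X, Y]ⁱ = Σⱼ (Xʲ ∂ⱼYⁱ − Yʲ ∂ⱼXⁱ)`. -/
noncomputable def lieB (X Y : (Fin 4 → ℝ) → (Fin 4 → ℝ)) : (Fin 4 → ℝ) → (Fin 4 → ℝ) :=
  fun x i => ∑ j : Fin 4, (X x j * pd j (fun y => Y y i) x - Y x j * pd j (fun y => X y i) x)

/-!
Only the components along `∂₃, ∂₄` of `[X, Y]` can be nonzero. Each of them is `λ` times
`∂₁∂ₖv − ∂₂∂ₖu`, which vanishes by differentiating `u₂ = v₁`, plus a Hamiltonian term which is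
exactly `∂ₖ(u₃v₄ − u₄v₃)`, zero because the Jacobian is constant. Both cancellations use the
symmetry of second partial derivatives.
-/

open Filter Topology

section PartialDerivatives

variable {F G : (Fin 4 → ℝ) → ℝ} {x : Fin 4 → ℝ}

lemma differentiableAt_fderiv_of_contDiffAt_two (hF : ContDiffAt ℝ 2 F x) :
    DifferentiableAt ℝ (fderiv ℝ F) x :=
  (hF.fderiv_right (m := 1) le_rfl).differentiableAt one_ne_zero

lemma differentiableAt_pd (hF : ContDiffAt ℝ 2 F x) (i : Fin 4) :
    DifferentiableAt ℝ (pd i F) x :=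
  (differentiableAt_fderiv_of_contDiffAt_two hF).clm_apply (differentiableAt_const _)

lemma pd_pd_eq_fderiv_fderiv (hF : ContDiffAt ℝ 2 F x) (i j : Fin 4) :
    pd i (pd j F) x = fderiv ℝ (fderiv ℝ F) x (Pi.single i 1) (Pi.single j 1) := by
  change fderiv ℝ (fun y => fderiv ℝ F y (Pi.single j 1)) x (Pi.single i 1) = _
  simp [fderiv_clm_apply (differentiableAt_fderiv_of_contDiffAt_two hF)
    (differentiableAt_const _)]

lemma pd_pd_comm (hF : ContDiffAt ℝ 2 F x) (i j : Fin 4) :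
    pd i (pd j F) x = pd j (pd i F) x := by
  rw [pd_pd_eq_fderiv_fderiv hF, pd_pd_eq_fderiv_fderiv hF]
  exact hF.isSymmSndFDerivAt (by simp [minSmoothness_of_isRCLikeNormedField]) _ _

lemma pd_congr_of_eventuallyEq (h : F =ᶠ[𝓝 x] G) (i : Fin 4) : pd i F x = pd i G x := by
  simp only [pd, h.fderiv_eq]

@[simp]
lemma pd_const (i : Fin 4) (c : ℝ) : pd i (fun _ => c) x = 0 := by
  simp [pd]

@[simp]
lemma pd_neg (i : Fin 4) : pd i (fun y => -F y) x = -pd i F x := by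
  simp [pd]

lemma pd_sub (hF : DifferentiableAt ℝ F x) (hG : DifferentiableAt ℝ G x) (i : Fin 4) :
    pd i (fun y => F y - G y) x = pd i F x - pd i G x := by
  simp [pd, fderiv_fun_sub hF hG]

lemma pd_mul (hF : DifferentiableAt ℝ F x) (hG : DifferentiableAt ℝ G x) (i : Fin 4) :
    pd i (fun y => F y * G y) x = F x * pd i G x + G x * pd i F x := by
  simp [pd, fderiv_fun_mul hF hG]

end PartialDerivatives

lemma pd_zero_pd_eq_pd_one_pd {u v : (Fin 4 → ℝ) → ℝ} {x : Fin 4 → ℝ}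
    (hu : ContDiffAt ℝ 2 u x) (hv : ContDiffAt ℝ 2 v x)
    (h : pd 1 u =ᶠ[𝓝 x] pd 0 v) (k : Fin 4) :
    pd 0 (pd k v) x = pd 1 (pd k u) x := by
  rw [pd_pd_comm hv, ← pd_congr_of_eventuallyEq h, pd_pd_comm hu]

lemma pd_jacobian_eq_zero {u v : (Fin 4 → ℝ) → ℝ} {x : Fin 4 → ℝ} {c : ℝ}
    (hu : ContDiffAt ℝ 2 u x) (hv : ContDiffAt ℝ 2 v x)
    (h : (fun y => pd 2 u y * pd 3 v y - pd 3 u y * pd 2 v y) =ᶠ[𝓝 x] fun _ => c)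
    (k : Fin 4) :
    pd 2 u x * pd k (pd 3 v) x + pd 3 v x * pd k (pd 2 u) x
      - (pd 3 u x * pd k (pd 2 v) x + pd 2 v x * pd k (pd 3 u) x) = 0 := by
  have hdu := differentiableAt_pd hu
  have hdv := differentiableAt_pd hv
  have := pd_congr_of_eventuallyEq h k
  rwa [pd_const, pd_sub (F := fun y => pd 2 u y * pd 3 v y) (G := fun y => pd 3 u y * pd 2 v y)
    ((hdu 2).mul (hdv 3)) ((hdu 3).mul (hdv 2)),
    pd_mul (hdu 2) (hdv 3), pd_mul (hdu 3) (hdv 2)] at this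

-- The paper's coordinate `xⁱ` is `x (i - 1)` here.
/-- The vector fields `X = u₃∂₄ − u₄∂₃ + λ∂₁`, `Y = −v₃∂₄ + v₄∂₃ − λ∂₂` form a Lax pair for
the first heavenly system `u₂ = v₁`, `u₃v₄ − u₄v₃ = 1`: on any solution they commute for
every `λ`.  Coordinates `x¹,…,x⁴` are indexed by `0,…,3`. -/
theorem statement2 (Ω : Set (Fin 4 → ℝ)) (hΩ : IsOpen Ω)
    (u v : (Fin 4 → ℝ) → ℝ)
    (hu : ContDiffOn ℝ (⊤ : ℕ∞) u Ω) (hv : ContDiffOn ℝ (⊤ : ℕ∞) v Ω)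
    (h1 : ∀ x ∈ Ω, pd 1 u x = pd 0 v x)
    (h2 : ∀ x ∈ Ω, pd 2 u x * pd 3 v x - pd 3 u x * pd 2 v x = 1)
    (lam : ℝ) :
    ∀ x ∈ Ω,
      lieB (fun y => ![lam, 0, -(pd 3 u y), pd 2 u y])
           (fun y => ![0, -lam, pd 3 v y, -(pd 2 v y)]) x = 0 := by
  intro x hx
  have hΩx : Ω ∈ 𝓝 x := hΩ.mem_nhds hx
  have hux : ContDiffAt ℝ 2 u x := (hu.contDiffAt hΩx).of_le (ENat.natCast_le_of_coe_top_le_withTop le_rfl 2)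
  have hvx : ContDiffAt ℝ 2 v x := (hv.contDiffAt hΩx).of_le (ENat.natCast_le_of_coe_top_le_withTop le_rfl 2)
  have compat := pd_zero_pd_eq_pd_one_pd hux hvx (eventuallyEq_of_mem hΩx h1)
  have jac := pd_jacobian_eq_zero hux hvx (eventuallyEq_of_mem hΩx h2)
  have jac₂ := jac 2
  have jac₃ := jac 3
  rw [pd_pd_comm hux 2 3, pd_pd_comm hvx 2 3] at jac₂
  rw [pd_pd_comm hux 3 2, pd_pd_comm hvx 3 2] at jac₃
  funext i
  fin_cases i <;> simp [lieB, Fin.sum_univ_four]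
  · linear_combination lam * compat 3 + jac₃
  · linear_combination -lam * compat 2 - jac₂
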